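/- Let R be an associative unital ring that is left Noetherian but not right Noetherian. Then the flipped polynomial ring R[X]^fl (with σ = id and δ = 0) is not left Noetherian. More precisely, given a strictly ascending chain of right ideals I₁ ⊊ I₂ ⊊ ⋯ of R, the sets Jᵢ := IᵢX + R[X]^fl · X² form a strictly ascending chain of left ideals of R[X]^fl. -/

import Mathlib

open Finset
open scoped Classical

section Defs

variable {R : Type*} {S : Type*}

/-- Iterated power: `pw x 0 = 1`, `pw x (n+1) = pw x n * x`. -/
def pw [One S] [Mul S] (x : S) : ℕ → S
  | 0 => 1
  | n + 1 => pw x n * x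

/-- `x` is power-associative. -/
def PowAssoc [One S] [Mul S] (x : S) : Prop := ∀ m n : ℕ, pw x m * pw x n = pw x (m + n)

variable [NonAssocRing R] [NonAssocRing S]

/-- Interpret a finitely supported coefficient family as a left polynomial `Σ f(cᵢ)·xⁱ`. -/
noncomputable def lpoly (f : R →+* S) (x : S) (c : ℕ →₀ R) : S :=
  c.sum fun i r => f r * pw x i

/-- Right polynomial `Σ xⁱ·f(cᵢ)`. -/
noncomputable def rpoly (f : R →+* S) (x : S) (c : ℕ →₀ R) : S :=
  c.sum fun i r => pw x i * f r

/-- Left degree (`⊥` plays the role of `-∞`), computed from a representation as a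
left polynomial in `x` (unique when `{1,x,x²,…}` is a left basis). -/
noncomputable def degl (f : R →+* S) (x : S) (p : S) : WithBot ℕ :=
  if h : ∃ c : ℕ →₀ R, lpoly f x c = p then (Classical.choose h).support.max else ⊥

/-- Left leading coefficient (`0` for the zero polynomial). -/
noncomputable def lcl (f : R →+* S) (x : S) (p : S) : R :=
  if h : ∃ c : ℕ →₀ R, lpoly f x c = p then
    (Classical.choose h) (WithBot.unbotD 0 (Classical.choose h).support.max) else 0

/-- Right degree. -/
noncomputable def degr (f : R →+* S) (x : S) (p : S) : WithBot ℕ :=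
  if h : ∃ c : ℕ →₀ R, rpoly f x c = p then (Classical.choose h).support.max else ⊥

/-- Right leading coefficient. -/
noncomputable def lcr (f : R →+* S) (x : S) (p : S) : R :=
  if h : ∃ c : ℕ →₀ R, rpoly f x c = p then
    (Classical.choose h) (WithBot.unbotD 0 (Classical.choose h).support.max) else 0

/-- `(S,x)` is a left generalized nonassociative Ore extension of `R`
(with the embedding `f : R →+* S`). -/
structure IsLeftGNOE (f : R →+* S) (x : S) : Prop where
  inj : Function.Injective f
  powAssoc : PowAssoc x
  basis : Function.Bijective (lpoly f x)
  closed : ∀ (m n : ℕ) (r s : R), ∃ c : ℕ →₀ R,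
    lpoly f x c = (f r * pw x m) * (f s * pw x n) ∧ ∀ i, m + n < i → c i = 0

/-- `(S,x)` is a right generalized nonassociative Ore extension of `R`. -/
structure IsRightGNOE (f : R →+* S) (x : S) : Prop where
  inj : Function.Injective f
  powAssoc : PowAssoc x
  basis : Function.Bijective (rpoly f x)
  closed : ∀ (m n : ℕ) (r s : R), ∃ c : ℕ →₀ R,
    rpoly f x c = (pw x m * f r) * (pw x n * f s) ∧ ∀ i, m + n < i → c i = 0

/-- Right ideal of a (nonassociative) ring. -/
def IsRightIdeal (T : Type*) [NonAssocRing T] (I : Set T) : Prop :=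
  (0 : T) ∈ I ∧ (∀ a b, a ∈ I → b ∈ I → a + b ∈ I) ∧ (∀ a, a ∈ I → -a ∈ I) ∧
    ∀ a t, a ∈ I → a * t ∈ I

/-- Left ideal of a (nonassociative) ring. -/
def IsLeftIdeal (T : Type*) [NonAssocRing T] (I : Set T) : Prop :=
  (0 : T) ∈ I ∧ (∀ a b, a ∈ I → b ∈ I → a + b ∈ I) ∧ (∀ a, a ∈ I → -a ∈ I) ∧
    ∀ a t, a ∈ I → t * a ∈ I

/-- The right ideal generated by a set. -/
def rIdealGen (T : Type*) [NonAssocRing T] (G : Set T) : Set T :=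
  ⋂₀ {I : Set T | IsRightIdeal T I ∧ G ⊆ I}

/-- The left ideal generated by a set. -/
def lIdealGen (T : Type*) [NonAssocRing T] (G : Set T) : Set T :=
  ⋂₀ {I : Set T | IsLeftIdeal T I ∧ G ⊆ I}

/-- Right Noetherian: every right ideal is finitely generated. -/
def RightNoeth (T : Type*) [NonAssocRing T] : Prop :=
  ∀ I : Set T, IsRightIdeal T I → ∃ G : Finset T, I = rIdealGen T ↑G

/-- Left Noetherian: every left ideal is finitely generated. -/
def LeftNoeth (T : Type*) [NonAssocRing T] : Prop :=
  ∀ I : Set T, IsLeftIdeal T I → ∃ G : Finset T, I = lIdealGen T ↑G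

/-- `M` is a right `R`-submodule of `S` (via `f`). -/
def IsRightRSub (f : R →+* S) (M : Set S) : Prop :=
  (0 : S) ∈ M ∧ (∀ a b, a ∈ M → b ∈ M → a + b ∈ M) ∧ (∀ a, a ∈ M → -a ∈ M) ∧
    ∀ a r, a ∈ M → a * f r ∈ M

/-- `M` is a left `R`-submodule of `S` (via `f`). -/
def IsLeftRSub (f : R →+* S) (M : Set S) : Prop :=
  (0 : S) ∈ M ∧ (∀ a b, a ∈ M → b ∈ M → a + b ∈ M) ∧ (∀ a, a ∈ M → -a ∈ M) ∧
    ∀ a r, a ∈ M → f r * a ∈ M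

/-- The right `R`-submodule of `S` generated by a set. -/
def rSubGen (f : R →+* S) (G : Set S) : Set S :=
  ⋂₀ {M : Set S | IsRightRSub f M ∧ G ⊆ M}

/-- `s` belongs to the right ideal of `S` generated by `p 0, …, p (n-1)` and admits a
left-degree-additive representation `s = Σⱼ (⋯((p_{iⱼ} s_{j1})s_{j2})⋯)s_{jm}` whose degree
bound `max_j (deg_l p_{iⱼ} + Σₖ deg_l s_{jk})` equals `deg_l s`. -/
def LDegAddMem (f : R →+* S) (x : S) {n : ℕ} (p : Fin n → S) (s : S) : Prop :=
  ∃ L : List (Fin n × List S),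
    s = (L.map fun t => t.2.foldl (· * ·) (p t.1)).sum ∧
    degl f x s
      = (L.map fun t => degl f x (p t.1) + (t.2.map (degl f x)).sum).foldr max ⊥

/-- `s` belongs to the left ideal of `S` generated by `p 0, …, p (n-1)` and admits a
right-degree-additive representation. -/
def RDegAddMem (f : R →+* S) (x : S) {n : ℕ} (p : Fin n → S) (s : S) : Prop :=
  ∃ L : List (Fin n × List S),
    s = (L.map fun t => t.2.foldl (fun b a => a * b) (p t.1)).sum ∧
    degr f x s
      = (L.map fun t => degr f x (p t.1) + (t.2.map (degr f x)).sum).foldr max ⊥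

/-- The left Euclidean division algorithm for `(S,x)` over `R`. -/
def LeftEDA (f : R →+* S) (x : S) : Prop :=
  ∀ (n : ℕ) (p : Fin n → S) (q : S), q ≠ 0 →
    (∀ i, degl f x (p i) ≤ degl f x q) →
    lcl f x q ∈ rIdealGen R (Set.range fun i => lcl f x (p i)) →
    ∃ s, LDegAddMem f x p s ∧ degl f x (q - s) < degl f x q

/-- The right Euclidean division algorithm for `(S,x)` over `R`. -/
def RightEDA (f : R →+* S) (x : S) : Prop :=
  ∀ (n : ℕ) (p : Fin n → S) (q : S), q ≠ 0 →
    (∀ i, degr f x (p i) ≤ degr f x q) →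
    lcr f x q ∈ lIdealGen R (Set.range fun i => lcr f x (p i)) →
    ∃ s, RDegAddMem f x p s ∧ degr f x (q - s) < degr f x q

/-- The maps `πᵢᵐ`: the sum of all `C(m,i)` compositions of `i` copies of `σ`
and `m - i` copies of `δ`. -/
def pimap (σ δ : R → R) : ℕ → ℕ → R → R
  | 0, 0 => id
  | _ + 1, 0 => fun _ => 0
  | 0, m + 1 => fun r => δ (pimap σ δ 0 m r)
  | i + 1, m + 1 => fun r => σ (pimap σ δ i m r) + δ (pimap σ δ (i + 1) m r)

/-- `(S,x)` realizes the generalized polynomial ring `R[X;σ,δ]`: `{1,x,x²,…}` is a left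
`R`-basis and multiplication is given by `(rxᵐ)(sxⁿ) = Σᵢ (r πᵢᵐ(s)) x^{i+n}`. -/
def IsGPolyRing (σ δ : R → R) (f : R →+* S) (x : S) : Prop :=
  Function.Injective f ∧ PowAssoc x ∧ Function.Bijective (lpoly f x) ∧
    ∀ (r s : R) (m n : ℕ),
      (f r * pw x m) * (f s * pw x n)
        = ∑ i ∈ Finset.range (m + 1), f (r * pimap σ δ i m s) * pw x (i + n)

/-- `(S,x)` realizes the flipped generalized polynomial ring `R[X;σ,δ]^fl`:
multiplication is given by `(rxᵐ)(sxⁿ) = Σᵢ τₙ(r, πᵢᵐ(s)) x^{i+n}`. -/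
def IsFlipGPolyRing (σ δ : R → R) (f : R →+* S) (x : S) : Prop :=
  Function.Injective f ∧ PowAssoc x ∧ Function.Bijective (lpoly f x) ∧
    ∀ (r s : R) (m n : ℕ),
      (f r * pw x m) * (f s * pw x n)
        = ∑ i ∈ Finset.range (m + 1),
            f (if Even n then r * pimap σ δ i m s else pimap σ δ i m s * r) * pw x (i + n)

end Defs


section AuxProof

variable {R : Type*} {S : Type*} [Ring R] [NonAssocRing S]

lemma pimap_id_zero (i m : ℕ) (r : R) :
    pimap (id : R → R) (fun _ => (0 : R)) i m r = if i = m then r else 0 := by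
  induction m generalizing i with
  | zero =>
    match i with
    | 0 => simp [pimap]
    | i + 1 => simp [pimap]
  | succ m ih =>
    match i with
    | 0 => simp [pimap]
    | i + 1 => simp [pimap, ih]

variable {f : R →+* S} {x : S}

lemma mono_mul (hpoly : IsFlipGPolyRing (id : R → R) (fun _ => (0 : R)) f x)
    (r s : R) (m n : ℕ) :
    (f r * pw x m) * (f s * pw x n)
      = f (if Even n then r * s else s * r) * pw x (m + n) := by
  rw [hpoly.2.2.2]
  rw [Finset.sum_eq_single m]
  · rw [pimap_id_zero]; simp
  · intro i _ hi
    rw [pimap_id_zero]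
    simp [hi]
  · intro h; exact absurd (Finset.self_mem_range_succ m) h

lemma pw_one' (x : S) : pw x 1 = x := by simp [pw]

lemma lpoly_single' (f : R →+* S) (x : S) (n : ℕ) (r : R) :
    lpoly f x (Finsupp.single n r) = f r * pw x n := by
  rw [lpoly, Finsupp.sum_single_index]
  simp

lemma lpoly_add' (f : R →+* S) (x : S) (c d : ℕ →₀ R) :
    lpoly f x (c + d) = lpoly f x c + lpoly f x d := by
  rw [lpoly, lpoly, lpoly, Finsupp.sum_add_index']
  · intro n; simp
  · intro n r s; rw [map_add, add_mul]

lemma mul_pw2 (hpoly : IsFlipGPolyRing (id : R → R) (fun _ => (0 : R)) f x)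
    (v : R) (k : ℕ) : (f v * pw x k) * pw x 2 = f v * pw x (k + 2) := by
  have h1 : pw x 2 = f 1 * pw x 2 := by rw [map_one, one_mul]
  rw [h1, mono_mul hpoly]
  norm_num

lemma sum_mul_pw2 (hpoly : IsFlipGPolyRing (id : R → R) (fun _ => (0 : R)) f x)
    (e : ℕ →₀ R) (g : ℕ → R → R) (k : ℕ → ℕ) :
    (e.sum fun j u => f (g j u) * pw x (k j)) * pw x 2
      = e.sum fun j u => f (g j u) * pw x (k j + 2) := by
  rw [Finsupp.sum_mul]
  exact Finsupp.sum_congr fun j _ => mul_pw2 hpoly _ _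

lemma lpoly_mul_mono (hpoly : IsFlipGPolyRing (id : R → R) (fun _ => (0 : R)) f x)
    (c : ℕ →₀ R) (a : R) (n : ℕ) :
    lpoly f x c * (f a * pw x n)
      = c.sum fun m r => f (if Even n then r * a else a * r) * pw x (m + n) := by
  rw [lpoly, Finsupp.sum_mul]
  exact Finsupp.sum_congr fun m _ => mono_mul hpoly _ _ _ _

lemma mono_mul_lpoly (hpoly : IsFlipGPolyRing (id : R → R) (fun _ => (0 : R)) f x)
    (r : R) (m : ℕ) (D : ℕ →₀ R) :
    (f r * pw x m) * lpoly f x D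
      = D.sum fun n u => f (if Even n then r * u else u * r) * pw x (m + n) := by
  rw [lpoly, Finsupp.mul_sum]
  exact Finsupp.sum_congr fun n _ => mono_mul hpoly _ _ _ _

lemma shift2 (hpoly : IsFlipGPolyRing (id : R → R) (fun _ => (0 : R)) f x)
    (d : ℕ →₀ R) :
    lpoly f x (Finsupp.mapDomain (· + 2) d) = lpoly f x d * pw x 2 := by
  rw [lpoly, Finsupp.sum_mapDomain_index (fun j => by simp) (fun j r s => by
        rw [map_add, add_mul]),
      lpoly, sum_mul_pw2 hpoly d (fun _ u => u) (fun j => j)]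

lemma part2 (hpoly : IsFlipGPolyRing (id : R → R) (fun _ => (0 : R)) f x)
    (s t : S) : ∃ u : S, s * (t * pw x 2) = u * pw x 2 := by
  obtain ⟨c, rfl⟩ := hpoly.2.2.1.2 s
  obtain ⟨d, rfl⟩ := hpoly.2.2.1.2 t
  refine ⟨c.sum fun m r => d.sum fun j u =>
    f (if Even j then r * u else u * r) * pw x (m + j), ?_⟩
  rw [← shift2 hpoly, lpoly, Finsupp.sum_mul, Finsupp.sum_mul]
  refine Finsupp.sum_congr fun m _ => ?_
  rw [mono_mul_lpoly hpoly,
      Finsupp.sum_mapDomain_index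
        (fun j => by simp) (fun j u v => by
          split_ifs with h
          · rw [mul_add, map_add, add_mul]
          · rw [add_mul, map_add, add_mul]),
      sum_mul_pw2 hpoly]
  refine Finsupp.sum_congr fun j _ => ?_
  have hev : Even (j + 2) ↔ Even j := by
    simp [Nat.even_add]
  rw [show m + (j + 2) = m + j + 2 from by omega]
  congr 2
  simp [hev]

lemma part1 (hpoly : IsFlipGPolyRing (id : R → R) (fun _ => (0 : R)) f x)
    (c : ℕ →₀ R) (a : R) :
    ∃ u : S, lpoly f x c * (f a * pw x 1)
      = f (a * c 0) * pw x 1 + u * pw x 2 := by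
  refine ⟨(c.erase 0).sum fun m r => f (a * r) * pw x (m - 1), ?_⟩
  conv_lhs => rw [← Finsupp.single_add_erase 0 c, lpoly_add', add_mul]
  congr 1
  · rw [lpoly_single', mono_mul hpoly]
    norm_num
  · rw [lpoly_mul_mono hpoly, sum_mul_pw2 hpoly]
    refine Finsupp.sum_congr fun m hm => ?_
    have hm0 : m ≠ 0 := by
      intro h
      rw [Finsupp.mem_support_iff] at hm
      exact hm (by simp [h])
    rw [show m - 1 + 2 = m + 1 from by omega]
    norm_num

lemma main_mul (hpoly : IsFlipGPolyRing (id : R → R) (fun _ => (0 : R)) f x)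
    (s : S) (a : R) (t : S) :
    ∃ (b : R) (u : S),
      s * (f a * pw x 1 + t * pw x 2) = f (a * b) * pw x 1 + u * pw x 2 := by
  obtain ⟨c, hc⟩ := hpoly.2.2.1.2 s
  obtain ⟨u₁, h1⟩ := part1 hpoly c a
  obtain ⟨u₂, h2⟩ := part2 hpoly s t
  refine ⟨c 0, u₁ + u₂, ?_⟩
  rw [mul_add, h2, ← hc, h1, add_mul, add_assoc]

lemma coeff1 (hpoly : IsFlipGPolyRing (id : R → R) (fun _ => (0 : R)) f x)
    (a b : R) (t : S) (h : f a * pw x 1 = f b * pw x 1 + t * pw x 2) : a = b := by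
  obtain ⟨d, rfl⟩ := hpoly.2.2.1.2 t
  rw [← shift2 hpoly, ← lpoly_single' f x 1 a, ← lpoly_single' f x 1 b,
      ← lpoly_add'] at h
  have h2 := hpoly.2.2.1.1 h
  have h3 := DFunLike.congr_fun h2 1
  have h4 : Finsupp.mapDomain (· + 2) d 1 = 0 :=
    Finsupp.mapDomain_notin_range d 1 (by
      simp only [Set.mem_range]
      rintro ⟨j, hj⟩
      omega)
  simpa [h4] using h3

end AuxProof

/-- if `R` is an associative ring that is left Noetherian but not right
Noetherian, then `R[X]^fl` is not left Noetherian; more precisely, a strictly ascending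
chain `I₁ ⊊ I₂ ⊊ ⋯` of right ideals of `R` yields the strictly ascending chain of left
ideals `Jᵢ = IᵢX + R[X]^fl·X²`. -/
theorem stmt18 {R S : Type*} [Ring R] [NonAssocRing S] (f : R →+* S) (x : S)
    (hpoly : IsFlipGPolyRing (id : R → R) (fun _ => (0 : R)) f x)
    (hLN : LeftNoeth R) (hnRN : ¬ RightNoeth R)
    (I : ℕ → Set R) (hIideal : ∀ i, IsRightIdeal R (I i))
    (hchain : ∀ i, I i ⊆ I (i + 1)) (hne : ∀ i, I i ≠ I (i + 1))
    (J : ℕ → Set S)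
    (hJ : ∀ i, J i = {s : S | ∃ a ∈ I i, ∃ t : S, s = f a * x + t * pw x 2}) :
    (∀ i, IsLeftIdeal S (J i)) ∧ (∀ i, J i ⊆ J (i + 1)) ∧ (∀ i, J i ≠ J (i + 1)) ∧
      ¬ LeftNoeth S := by
  have surj := hpoly.2.2.1.2
  have hpw1 : pw x 1 = x := pw_one' x
  -- key: coefficient extraction
  have hkey : ∀ i a, f a * x ∈ J i → a ∈ I i := by
    intro i a ha
    rw [hJ] at ha
    obtain ⟨b, hb, t, ht⟩ := ha
    have ht' : f a * pw x 1 = f b * pw x 1 + t * pw x 2 := by rw [hpw1]; exact ht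
    exact (coeff1 hpoly a b t ht') ▸ hb
  have hleft : ∀ i, IsLeftIdeal S (J i) := by
    intro i
    refine ⟨?_, ?_, ?_, ?_⟩
    · rw [hJ]; exact ⟨0, (hIideal i).1, 0, by simp⟩
    · intro p q hp hq
      rw [hJ] at hp hq ⊢
      obtain ⟨a, ha, t, rfl⟩ := hp
      obtain ⟨b, hb, u, rfl⟩ := hq
      refine ⟨a + b, (hIideal i).2.1 a b ha hb, t + u, ?_⟩
      rw [map_add, add_mul, add_mul]
      abel
    · intro p hp
      rw [hJ] at hp ⊢
      obtain ⟨a, ha, t, rfl⟩ := hp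
      refine ⟨-a, (hIideal i).2.2.1 a ha, -t, ?_⟩
      rw [map_neg, neg_mul, neg_mul, neg_add]
    · intro p q hp
      rw [hJ] at hp ⊢
      obtain ⟨a, ha, t, rfl⟩ := hp
      obtain ⟨b, u, h⟩ := main_mul hpoly q a t
      rw [hpw1] at h
      exact ⟨a * b, (hIideal i).2.2.2 a b ha, u, h⟩
  have hstep : ∀ i, J i ⊆ J (i + 1) := by
    intro i s hs
    rw [hJ] at hs ⊢
    obtain ⟨a, ha, t, rfl⟩ := hs
    exact ⟨a, hchain i ha, t, rfl⟩
  have hJmono : ∀ i j, i ≤ j → J i ⊆ J j := by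
    intro i j hij
    induction j with
    | zero => simpa [Nat.le_zero.mp hij] using Set.Subset.rfl
    | succ j ihj =>
      rcases Nat.lt_or_ge i (j + 1) with h | h
      · exact (ihj (Nat.lt_succ_iff.mp h)).trans (hstep j)
      · have : i = j + 1 := le_antisymm hij h
        simp [this]
  have hne' : ∀ i, J i ≠ J (i + 1) := by
    intro i hEq
    obtain ⟨a, ha1, ha0⟩ : ∃ a, a ∈ I (i + 1) ∧ a ∉ I i := by
      by_contra h
      push_neg at h
      exact hne i (Set.Subset.antisymm (hchain i) h)
    have hmem : f a * x ∈ J (i + 1) := by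
      rw [hJ]; exact ⟨a, ha1, 0, by rw [zero_mul, add_zero]⟩
    exact ha0 (hkey i a (hEq ▸ hmem))
  refine ⟨hleft, hstep, hne', ?_⟩
  intro hLN'
  have hUideal : IsLeftIdeal S (⋃ n, J n) := by
    refine ⟨Set.mem_iUnion.2 ⟨0, (hleft 0).1⟩, ?_, ?_, ?_⟩
    · intro p q hp hq
      obtain ⟨m, hm⟩ := Set.mem_iUnion.1 hp
      obtain ⟨n, hn⟩ := Set.mem_iUnion.1 hq
      exact Set.mem_iUnion.2 ⟨max m n, (hleft _).2.1 _ _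
        (hJmono m _ (le_max_left m n) hm) (hJmono n _ (le_max_right m n) hn)⟩
    · intro p hp
      obtain ⟨m, hm⟩ := Set.mem_iUnion.1 hp
      exact Set.mem_iUnion.2 ⟨m, (hleft m).2.2.1 p hm⟩
    · intro p t hp
      obtain ⟨m, hm⟩ := Set.mem_iUnion.1 hp
      exact Set.mem_iUnion.2 ⟨m, (hleft m).2.2.2 p t hm⟩
  obtain ⟨G, hG⟩ := hLN' (⋃ n, J n) hUideal
  have hGU : ∀ g ∈ G, ∃ n, g ∈ J n := by
    intro g hg
    have : g ∈ ⋃ n, J n := by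
      rw [hG]
      exact fun T hT => hT.2 hg
    exact Set.mem_iUnion.1 this
  choose! nfun hnfun using hGU
  set N := G.sup nfun with hN
  have hGN : (G : Set S) ⊆ J N := by
    intro g hg
    exact hJmono _ _ (Finset.le_sup hg) (hnfun g hg)
  have hUN : (⋃ n, J n) ⊆ J N := by
    rw [hG]
    exact Set.sInter_subset_of_mem ⟨hleft N, hGN⟩
  have hIN : I (N + 1) ⊆ I N := by
    intro a ha
    refine hkey N a (hUN (Set.mem_iUnion.2 ⟨N + 1, ?_⟩))
    rw [hJ]
    exact ⟨a, ha, 0, by rw [zero_mul, add_zero]⟩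
  exact hne N (Set.Subset.antisymm (hchain N) hIN)
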